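/- Let ρ and σ be positive definite quantum states on a finite-dimensional complex Hilbert space and let m be the minimal eigenvalue of σ. Then D̂(ρ‖σ) ≤ D(ρ‖σ) + (1/m)·‖ρ − σ‖∞. -/

import Mathlib

open Matrix MeasureTheory
open scoped Kronecker Classical ComplexOrder

noncomputable section

namespace QPaper

variable {n : Type*}

/-- A quantum state: positive semidefinite matrix with trace one. -/
def IsState [Fintype n] (ρ : Matrix n n ℂ) : Prop :=
  ρ.PosSemidef ∧ ρ.trace = 1

/-- The trace norm of a matrix: `tr √(XᴴX)`. -/
noncomputable def traceNorm [Fintype n] [DecidableEq n] (X : Matrix n n ℂ) : ℝ :=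
  (((Matrix.posSemidef_conjTranspose_mul_self X).1.eigenvectorUnitary.1 *
      Matrix.diagonal (((↑) : ℝ → ℂ) ∘ (√·) ∘ (Matrix.posSemidef_conjTranspose_mul_self X).1.eigenvalues) *
      (star (Matrix.posSemidef_conjTranspose_mul_self X).1.eigenvectorUnitary : Matrix n n ℂ)).trace).re

/-- Functional calculus for Hermitian matrices: apply `f` to the eigenvalues. -/
noncomputable def matFun [Fintype n] [DecidableEq n] (f : ℝ → ℂ) (A : Matrix n n ℂ) :
    Matrix n n ℂ :=
  if hA : A.IsHermitian then
    (hA.eigenvectorUnitary : Matrix n n ℂ) *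
      Matrix.diagonal (fun i => f (hA.eigenvalues i)) *
        (hA.eigenvectorUnitary : Matrix n n ℂ)ᴴ
  else 0

/-- Matrix logarithm on the support (0 ↦ 0). -/
noncomputable def mlog [Fintype n] [DecidableEq n] (A : Matrix n n ℂ) : Matrix n n ℂ :=
  matFun (fun x => (Real.log x : ℂ)) A

/-- Real matrix powers on the support (Moore-Penrose style, 0 ↦ 0 for r ≠ 0). -/
noncomputable def mpow [Fintype n] [DecidableEq n] (A : Matrix n n ℂ) (r : ℝ) : Matrix n n ℂ :=
  matFun (fun x => ((x ^ r : ℝ) : ℂ)) A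

/-- Complex matrix powers on the support (0 ↦ 0). -/
noncomputable def mcpow [Fintype n] [DecidableEq n] (A : Matrix n n ℂ) (z : ℂ) : Matrix n n ℂ :=
  matFun (fun x => if x = 0 then 0 else (x : ℂ) ^ z) A

/-- The matrix `A log A`, functional calculus for `x ↦ x log x` (0 ↦ 0). -/
noncomputable def mXLogX [Fintype n] [DecidableEq n] (A : Matrix n n ℂ) : Matrix n n ℂ :=
  matFun (fun x => ((x * Real.log x : ℝ) : ℂ)) A

/-- Umegaki relative entropy `D(ρ‖K) = tr[ρ (log ρ - log K)]`. -/
noncomputable def relEnt [Fintype n] [DecidableEq n] (ρ K : Matrix n n ℂ) : ℝ :=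
  ((ρ * (mlog ρ - mlog K)).trace).re

/-- Belavkin–Staszewski entropy `D̂(ρ‖K) = tr[ρ log(ρ^{1/2} K⁻¹ ρ^{1/2})]`. -/
noncomputable def bsEnt [Fintype n] [DecidableEq n] (ρ K : Matrix n n ℂ) : ℝ :=
  ((ρ * mlog (mpow ρ (1/2) * mpow K (-1) * mpow ρ (1/2))).trace).re

/-- von Neumann entropy. -/
noncomputable def vnEnt [Fintype n] [DecidableEq n] (ρ : Matrix n n ℂ) : ℝ :=
  -(((ρ * mlog ρ).trace).re)

/-- Operator norm of a matrix. -/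
noncomputable def opNorm [Fintype n] [DecidableEq n] (X : Matrix n n ℂ) : ℝ :=
  ‖Matrix.toEuclideanCLM (𝕜 := ℂ) X‖

/-- `ker K ⊆ ker ρ`. -/
def kerLE [Fintype n] (K ρ : Matrix n n ℂ) : Prop :=
  ∀ v : n → ℂ, K.mulVec v = 0 → ρ.mulVec v = 0

/-- partial trace over the first factor. -/
noncomputable def ptrA {a b : Type*} [Fintype a] (ρ : Matrix (a × b) (a × b) ℂ) :
    Matrix b b ℂ :=
  Matrix.of fun i j => ∑ x : a, ρ (x, i) (x, j)

/-- partial trace over the second factor. -/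
noncomputable def ptrB {a b : Type*} [Fintype b] (ρ : Matrix (a × b) (a × b) ℂ) :
    Matrix a a ℂ :=
  Matrix.of fun i j => ∑ x : b, ρ (i, x) (j, x)

/-- partial trace over the middle factor of a tripartite system. -/
noncomputable def ptrMid {a b c : Type*} [Fintype b]
    (ρ : Matrix (a × b × c) (a × b × c) ℂ) : Matrix (a × c) (a × c) ℂ :=
  Matrix.of fun p q => ∑ y : b, ρ (p.1, y, p.2) (q.1, y, q.2)

/-- Conditional entropy `H_ρ(A|B) = S(ρ_{AB}) - S(ρ_B)`. -/
noncomputable def condEnt {a b : Type*} [Fintype a] [Fintype b] [DecidableEq a] [DecidableEq b]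
    (ρ : Matrix (a × b) (a × b) ℂ) : ℝ :=
  vnEnt ρ - vnEnt (ptrA ρ)

/-- Mutual information `I_ρ(A:B) = S(ρ_A) + S(ρ_B) - S(ρ_{AB})`. -/
noncomputable def mutInfo {a b : Type*} [Fintype a] [Fintype b] [DecidableEq a] [DecidableEq b]
    (ρ : Matrix (a × b) (a × b) ℂ) : ℝ :=
  vnEnt (ptrB ρ) + vnEnt (ptrA ρ) - vnEnt ρ

/-- Conditional mutual information `I_ρ(A:B|C)`. -/
noncomputable def condMutInfo {a b c : Type*} [Fintype a] [Fintype b] [Fintype c]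
    [DecidableEq a] [DecidableEq b] [DecidableEq c]
    (ρ : Matrix (a × b × c) (a × b × c) ℂ) : ℝ :=
  vnEnt (ptrMid ρ) + vnEnt (ptrA ρ) - vnEnt (ptrA (ptrA ρ)) - vnEnt ρ

/-- BS-conditional entropy `Ĥ_ρ(A|B) = -D̂(ρ ‖ 𝟙_A ⊗ ρ_B)`. -/
noncomputable def bsCondEnt {a b : Type*} [Fintype a] [Fintype b] [DecidableEq a] [DecidableEq b]
    (ρ : Matrix (a × b) (a × b) ℂ) : ℝ :=
  -(bsEnt ρ ((1 : Matrix a a ℂ) ⊗ₖ ptrA ρ))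

/-- BS-mutual information `Î_ρ(A:B) = D̂(ρ ‖ ρ_A ⊗ ρ_B)`. -/
noncomputable def bsMutInfo {a b : Type*} [Fintype a] [Fintype b] [DecidableEq a] [DecidableEq b]
    (ρ : Matrix (a × b) (a × b) ℂ) : ℝ :=
  bsEnt ρ (ptrB ρ ⊗ₖ ptrA ρ)

/-- BS-conditional mutual information `Î_ρ(A:B|C) = Ĥ_ρ(A|C) - Ĥ_ρ(A|BC)`. -/
noncomputable def bsCondMutInfo {a b c : Type*} [Fintype a] [Fintype b] [Fintype c]
    [DecidableEq a] [DecidableEq b] [DecidableEq c]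
    (ρ : Matrix (a × b × c) (a × b × c) ℂ) : ℝ :=
  bsCondEnt (ptrMid ρ) - bsCondEnt (a := a) (b := b × c) ρ

/-- Binary entropy. -/
noncomputable def binEnt (p : ℝ) : ℝ :=
  -(p * Real.log p) - (1 - p) * Real.log (1 - p)

/-- The function `f_{c₁,c₂}`. -/
noncomputable def fcc (c₁ c₂ p : ℝ) : ℝ :=
  p * Real.log (p + (1 - p) * c₁) + (1 - p) * Real.log ((1 - p) + p * c₂)

/-- The probability density `β₀`. -/
noncomputable def beta0 (t : ℝ) : ℝ :=
  (Real.pi / 2) * (Real.cosh (Real.pi * t) + 1)⁻¹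

/-!
By Klein's inequality `D(ρ‖σ) ≥ 0`, so it suffices to show `D̂(ρ‖σ) ≤ c` with
`c = ‖ρ - σ‖∞ / m`. Since `σ ≥ m`, we have `ρ ≤ σ + ‖ρ - σ‖∞ ≤ (1 + c) σ`. Conjugating this by
`σ⁻¹ ρ^{1/2}` shows that `M = ρ^{1/2} σ⁻¹ ρ^{1/2}` satisfies `M² ≤ (1 + c) M`, so the spectrum of
`M` lies in `[0, 1 + c]`. Hence `log M ≤ c`, and `D̂(ρ‖σ) = tr ρ log M ≤ c tr ρ = c`.

For Klein's inequality, expand in the eigenbases `ρ uᵢ = pᵢ uᵢ`, `σ vⱼ = qⱼ vⱼ` with the weights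
`wᵢⱼ = |⟨uᵢ, vⱼ⟩|² ≥ 0`: then `D(ρ‖σ) = ∑ wᵢⱼ pᵢ (log pᵢ - log qⱼ)` and
`0 = tr ρ - tr σ = ∑ wᵢⱼ (pᵢ - qⱼ)`, so it follows termwise from `p - q ≤ p (log p - log q)`.
-/

open scoped MatrixOrder Matrix.Norms.L2Operator

section StarOrderedRing

variable {A : Type*} [Ring A] [StarRing A] [PartialOrder A] [StarOrderedRing A] [Algebra ℝ A]

theorem mul_self_le_smul_of_le_smul {a b r s : A} {t : ℝ} (hab : a ≤ t • b)
    (hr : IsSelfAdjoint r) (hs : IsSelfAdjoint s) (hrr : r * r = a) (hsb : s * b = 1) :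
    (r * s * r) * (r * s * r) ≤ t • (r * s * r) := by
  have key := star_left_conjugate_le_conjugate hab (s * r)
  rw [star_mul, hr.star_eq, hs.star_eq] at key
  convert key using 1
  · rw [← hrr]; noncomm_ring
  · rw [mul_smul_comm, smul_mul_assoc]
    congr 1
    calc r * s * r = r * (s * b) * s * r := by rw [hsb, mul_one]
      _ = r * s * b * (s * r) := by noncomm_ring

end StarOrderedRing

section CStarAlgebra

variable {A : Type*} [CStarAlgebra A] [PartialOrder A] [StarOrderedRing A]

theorem le_smul_of_algebraMap_le {a b : A} (ha : IsSelfAdjoint a) (hb : IsSelfAdjoint b)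
    {m : ℝ} (hm : 0 < m) (hmb : algebraMap ℝ A m ≤ b) : a ≤ (1 + ‖a - b‖ / m) • b := by
  have hab : a - b ≤ algebraMap ℝ A ‖a - b‖ := (ha.sub hb).le_algebraMap_norm_self
  have hscale : algebraMap ℝ A ‖a - b‖ ≤ (‖a - b‖ / m) • b := by
    calc algebraMap ℝ A ‖a - b‖ = (‖a - b‖ / m) • algebraMap ℝ A m := by
          rw [Algebra.smul_def, ← map_mul, div_mul_cancel₀ _ hm.ne']
      _ ≤ (‖a - b‖ / m) • b := smul_le_smul_of_nonneg_left hmb (by positivity)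
  calc a = b + (a - b) := (add_sub_cancel b a).symm
    _ ≤ b + (‖a - b‖ / m) • b := add_le_add_right (hab.trans hscale) b
    _ = (1 + ‖a - b‖ / m) • b := by rw [add_smul, one_smul]

theorem spectrum_subset_Icc_of_mul_self_le_smul {a : A} (ha : IsSelfAdjoint a) {t : ℝ}
    (ht : 0 ≤ t) (h : a * a ≤ t • a) : spectrum ℝ a ⊆ Set.Icc 0 t := by
  have hcfc : t • a - a * a = cfc (fun x : ℝ => t * x - x * x) a := by
    rw [cfc_sub _ _ a, cfc_const_mul _ _ a, cfc_mul _ _ a, cfc_id' ℝ a]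
  have hnonneg : 0 ≤ cfc (fun x : ℝ => t * x - x * x) a := hcfc ▸ sub_nonneg.mpr h
  intro x hx
  have := (cfc_nonneg_iff _ a).mp hnonneg x hx
  constructor <;> nlinarith

end CStarAlgebra

section Matrix

variable [Fintype n] [DecidableEq n]

theorem matFun_ofReal_eq_cfc (g : ℝ → ℝ) (A : Matrix n n ℂ) :
    matFun (fun x => (g x : ℂ)) A = cfc g A := by
  by_cases hA : A.IsHermitian
  · rw [matFun, dif_pos hA, hA.cfc_eq, IsHermitian.cfc, Unitary.conjStarAlgAut_apply]
    rfl
  · rw [matFun, dif_neg hA, cfc_apply_of_not_predicate]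
    exact hA

theorem mlog_eq_cfc (A : Matrix n n ℂ) : mlog A = cfc Real.log A :=
  matFun_ofReal_eq_cfc _ A

theorem mpow_eq_cfc (A : Matrix n n ℂ) (r : ℝ) : mpow A r = cfc (fun x : ℝ => x ^ r) A :=
  matFun_ofReal_eq_cfc _ A

theorem isSelfAdjoint_mpow (A : Matrix n n ℂ) (r : ℝ) : IsSelfAdjoint (mpow A r) := by
  rw [mpow_eq_cfc]
  exact cfc_predicate _ _

theorem mpow_half_mul_self {ρ : Matrix n n ℂ} (hρ : ρ.PosSemidef) :
    mpow ρ (1 / 2) * mpow ρ (1 / 2) = ρ := by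
  have hρ' : 0 ≤ ρ := nonneg_iff_posSemidef.mpr hρ
  rw [mpow_eq_cfc, ← cfc_mul _ _ ρ]
  conv_rhs => rw [← cfc_id' ℝ ρ]
  refine cfc_congr fun x hx => ?_
  rw [← Real.rpow_add' (spectrum_nonneg_of_nonneg hρ' hx) (by norm_num)]
  norm_num

theorem mpow_neg_one_mul_self {σ : Matrix n n ℂ} (hσ : σ.PosDef) : mpow σ (-1) * σ = 1 := by
  have hσ' : IsSelfAdjoint σ := hσ.isHermitian
  rw [mpow_eq_cfc]
  nth_rw 2 [← cfc_id' ℝ σ]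
  rw [← cfc_mul _ _ σ (σ.finite_real_spectrum.continuousOn _), ← cfc_one ℝ σ]
  refine cfc_congr fun x hx => ?_
  rw [Real.rpow_neg_one, inv_mul_cancel₀ (hσ.isStrictlyPositive.spectrum_pos hx).ne',
    Pi.one_apply]

theorem trace_mul_le_trace_mul {P X Y : Matrix n n ℂ} (hP : 0 ≤ P) (hXY : X ≤ Y) :
    (P * X).trace ≤ (P * Y).trace := by
  set R := CFC.sqrt P
  have hR : IsSelfAdjoint R := (CFC.sqrt_nonneg P).isSelfAdjoint
  have hconj : 0 ≤ R * (Y - X) * R := by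
    simpa [hR.star_eq] using star_left_conjugate_le_conjugate (sub_nonneg.mpr hXY) R
  have htr : (P * Y).trace - (P * X).trace = (R * (Y - X) * R).trace := by
    rw [← CFC.sqrt_mul_sqrt_self P, ← trace_sub, ← mul_sub, mul_assoc, trace_mul_comm, mul_assoc]
  exact sub_nonneg.mp (htr ▸ (nonneg_iff_posSemidef.mp hconj).trace_nonneg)

theorem cfc_log_le_algebraMap {M : Matrix n n ℂ} (hM : IsSelfAdjoint M) {c : ℝ} (hc : 0 ≤ c)
    (hspec : spectrum ℝ M ⊆ Set.Icc 0 (1 + c)) : cfc Real.log M ≤ algebraMap ℝ _ c := by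
  refine cfc_le_algebraMap _ c M (fun x hx => ?_) (M.finite_real_spectrum.continuousOn _) hM
  obtain ⟨hx0, hx1⟩ := hspec hx
  rcases hx0.eq_or_lt with rfl | hxpos
  · simpa using hc
  · linarith [Real.log_le_sub_one_of_pos hxpos]

theorem bsEnt_le_of_le_smul {ρ σ : Matrix n n ℂ} (hρ : IsState ρ) (hσ : σ.PosDef) {c : ℝ}
    (hc : 0 ≤ c) (hρσ : ρ ≤ (1 + c) • σ) : bsEnt ρ σ ≤ c := by
  unfold bsEnt
  set R := mpow ρ (1 / 2)
  set S := mpow σ (-1)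
  have hR : IsSelfAdjoint R := isSelfAdjoint_mpow ρ _
  have hS : IsSelfAdjoint S := isSelfAdjoint_mpow σ _
  have hM : IsSelfAdjoint (R * S * R) := by
    simpa [hR.star_eq, mul_assoc] using hS.conjugate R
  have hspec := spectrum_subset_Icc_of_mul_self_le_smul hM (by linarith)
    (mul_self_le_smul_of_le_smul hρσ hR hS (mpow_half_mul_self hρ.1) (mpow_neg_one_mul_self hσ))
  have htr := trace_mul_le_trace_mul (nonneg_iff_posSemidef.mpr hρ.1)
    (cfc_log_le_algebraMap hM hc hspec)
  rw [← mlog_eq_cfc, Algebra.algebraMap_eq_smul_one, mul_smul_comm, mul_one, trace_smul,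
    hρ.2] at htr
  simpa using (Complex.le_def.mp htr).1

/-- `overlap hA hB i j = |⟨uᵢ, vⱼ⟩|²` for the eigenbases `(uᵢ)` of `A` and `(vⱼ)` of `B`. -/
def overlap {A B : Matrix n n ℂ} (hA : A.IsHermitian) (hB : B.IsHermitian) (i j : n) : ℝ :=
  ‖(star (hA.eigenvectorUnitary : Matrix n n ℂ) * hB.eigenvectorUnitary) i j‖ ^ 2

theorem trace_diagonal_mul_mul_diagonal_mul_star (a b : n → ℂ) (W : Matrix n n ℂ) :
    (diagonal a * W * diagonal b * star W).trace =
      ∑ i, ∑ j, ((‖W i j‖ ^ 2 : ℝ) : ℂ) * a i * b j := by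
  refine Finset.sum_congr rfl fun i _ => ?_
  rw [diag_apply, mul_apply]
  refine Finset.sum_congr rfl fun j _ => ?_
  rw [mul_diagonal, diagonal_mul, star_apply, RCLike.star_def, Complex.ofReal_pow,
    ← Complex.mul_conj']
  ring

theorem re_trace_cfc_mul_cfc {A B : Matrix n n ℂ} (hA : A.IsHermitian) (hB : B.IsHermitian)
    (f g : ℝ → ℝ) :
    (cfc f A * cfc g B).trace.re =
      ∑ i, ∑ j, overlap hA hB i j * f (hA.eigenvalues i) * g (hB.eigenvalues j) := by
  rw [hA.cfc_eq, hB.cfc_eq, IsHermitian.cfc, IsHermitian.cfc, Unitary.conjStarAlgAut_apply,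
    Unitary.conjStarAlgAut_apply]
  set U : Matrix n n ℂ := ↑hA.eigenvectorUnitary
  set V : Matrix n n ℂ := ↑hB.eigenvectorUnitary
  have hW : star V * U = star (star U * V) := by rw [star_mul, star_star]
  rw [Matrix.mul_assoc U, Matrix.mul_assoc U, trace_mul_comm U]
  simp only [← Matrix.mul_assoc]
  rw [Matrix.mul_assoc _ (star V) U, hW, Matrix.mul_assoc (diagonal _) (star U) V,
    trace_diagonal_mul_mul_diagonal_mul_star]
  simp only [Complex.re_sum]
  refine Finset.sum_congr rfl fun i _ => Finset.sum_congr rfl fun j _ => ?_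
  simp only [Function.comp_apply, RCLike.ofReal_eq_complex_ofReal, ← Complex.ofReal_mul,
    Complex.ofReal_re]
  rfl

theorem relEnt_eq_sum_overlap {ρ σ : Matrix n n ℂ} (hρ : ρ.IsHermitian) (hσ : σ.IsHermitian) :
    relEnt ρ σ = ∑ i, ∑ j, overlap hρ hσ i j *
      (hρ.eigenvalues i * (Real.log (hρ.eigenvalues i) - Real.log (hσ.eigenvalues j))) := by
  have h : ρ * (mlog ρ - mlog σ) = cfc (fun x => x * Real.log x) ρ * cfc (1 : ℝ → ℝ) σ -
      cfc (id : ℝ → ℝ) ρ * cfc Real.log σ := by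
    rw [cfc_one ℝ σ, mul_one, cfc_mul (fun x => x) Real.log ρ (hg :=
      ρ.finite_real_spectrum.continuousOn _), cfc_id' ℝ ρ, cfc_id ℝ ρ, mlog_eq_cfc,
      mlog_eq_cfc, mul_sub]
  rw [relEnt, h, trace_sub, Complex.sub_re, re_trace_cfc_mul_cfc hρ hσ,
    re_trace_cfc_mul_cfc hρ hσ]
  simp only [mul_sub, mul_one, mul_assoc, Finset.sum_sub_distrib, id, Pi.one_apply]

theorem sum_overlap_mul_eigenvalues_sub {A B : Matrix n n ℂ} (hA : A.IsHermitian)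
    (hB : B.IsHermitian) :
    ∑ i, ∑ j, overlap hA hB i j * (hA.eigenvalues i - hB.eigenvalues j) =
      A.trace.re - B.trace.re := by
  have hAtr := re_trace_cfc_mul_cfc hA hB id 1
  rw [cfc_one ℝ B, mul_one, cfc_id ℝ A] at hAtr
  have hBtr := re_trace_cfc_mul_cfc hA hB 1 id
  rw [cfc_one ℝ A, one_mul, cfc_id ℝ B] at hBtr
  rw [hAtr, hBtr]
  simp only [mul_sub, mul_one, Finset.sum_sub_distrib, id, Pi.one_apply]

theorem sub_le_mul_log_sub_log {p q : ℝ} (hp : 0 ≤ p) (hq : 0 < q) :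
    p - q ≤ p * (Real.log p - Real.log q) := by
  rcases hp.eq_or_lt with rfl | hp
  · simpa using hq.le
  · have h := Real.log_le_sub_one_of_pos (div_pos hq hp)
    rw [Real.log_div hq.ne' hp.ne', div_sub_one hp.ne', le_div_iff₀ hp] at h
    nlinarith

theorem relEnt_nonneg {ρ σ : Matrix n n ℂ} (hρ : IsState ρ) (hσ : IsState σ) (hσpd : σ.PosDef) :
    0 ≤ relEnt ρ σ := by
  have hρH : ρ.IsHermitian := hρ.1.isHermitian
  have hmass := sum_overlap_mul_eigenvalues_sub hρH hσpd.isHermitian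
  rw [hρ.2, hσ.2, sub_self] at hmass
  rw [relEnt_eq_sum_overlap hρH hσpd.isHermitian, ← hmass]
  gcongr with i _ j _
  · exact sq_nonneg _
  · exact sub_le_mul_log_sub_log (hρ.1.eigenvalues_nonneg i) (hσpd.eigenvalues_pos j)

end Matrix

theorem bsEnt_le_relEnt_add_general {d : ℕ}
    (ρ σ : Matrix (Fin d) (Fin d) ℂ)
    (hρ : IsState ρ) (hσ : IsState σ) (hσpd : σ.PosDef)
    (m : ℝ) (hm : IsLeast {x : ℝ | (x : ℂ) ∈ spectrum ℂ σ} m) :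
    bsEnt ρ σ ≤ relEnt ρ σ + (1 / m) * opNorm (ρ - σ) := by
  have hspec : {x : ℝ | (x : ℂ) ∈ spectrum ℂ σ} = spectrum ℝ σ :=
    Set.ext fun _ => spectrum.algebraMap_mem_iff (R := ℝ) ℂ
  have hm' : IsLeast (spectrum ℝ σ) m := hspec ▸ hm
  have hm0 : 0 < m := hσpd.isStrictlyPositive.spectrum_pos hm'.1
  have hρσ := le_smul_of_algebraMap_le hρ.1.isHermitian hσpd.isHermitian hm0
    (algebraMap_le_of_le_spectrum fun _ hx => hm'.2 hx)
  have hbs := bsEnt_le_of_le_smul hρ hσpd (by positivity) hρσ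
  rw [one_div_mul_eq_div]
  exact hbs.trans (le_add_of_nonneg_left (relEnt_nonneg hρ hσ hσpd))

/-- **The BS-entropy exceeds the relative entropy by at most `(1/m)‖ρ-σ‖∞`**. -/
theorem bsEnt_le_relEnt_add {d : ℕ}
    (ρ σ : Matrix (Fin d) (Fin d) ℂ)
    (hρ : IsState ρ) (hσ : IsState σ) (hρpd : ρ.PosDef) (hσpd : σ.PosDef)
    (m : ℝ) (hm : IsLeast {x : ℝ | (x : ℂ) ∈ spectrum ℂ σ} m) :
    bsEnt ρ σ ≤ relEnt ρ σ + (1 / m) * opNorm (ρ - σ) :=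
  bsEnt_le_relEnt_add_general ρ σ hρ hσ hσpd m hm

end QPaper
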